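/- Every finitely generated, torsion, virtually solvable group is finite: if G is a finitely generated group in which every element has finite order, and G has a solvable subgroup of finite index, then G is finite. -/

import Mathlib

/-!
In a finitely generated torsion group the abelianization is a finitely generated torsion
abelian group, hence finite, so the commutator subgroup has finite index. Finite index
subgroups are again finitely generated (Schreier) and torsion, so by induction every term of
the derived series has finite index. For a solvable group some term is trivial, so the group
is finite; a virtually solvable group is then a finite extension of a finite group.
-/

open Subgroup

section

variable {G : Type*} [Group G] [Group.FG G]

theorem IsMulTorsion.finiteIndex_commutator (hG : IsMulTorsion G) :
    (commutator G).FiniteIndex := by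
  have hab : Function.Surjective (Abelianization.of : G →* Abelianization G) :=
    QuotientGroup.mk'_surjective _
  have : Group.FG (Abelianization G) := Group.fg_of_surjective hab
  have : Finite (Abelianization G) :=
    CommGroup.finite_of_fg_isMulTorsion _ (hG.of_surjective hab)
  exact finiteIndex_iff_finite_quotient.2 this

theorem IsMulTorsion.finiteIndex_commutator_self (hG : IsMulTorsion G) (H : Subgroup G)
    [H.FiniteIndex] : ⁅H, H⁆.FiniteIndex := by
  have hcomm := (hG.subgroup H).finiteIndex_commutator
  have hmap : (commutator H).map H.subtype = ⁅H, H⁆ := by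
    rw [commutator_def, map_commutator, ← MonoidHom.range_eq_map, range_subtype]
  rw [← hmap, finiteIndex_iff, index_map_subtype]
  exact mul_ne_zero hcomm.index_ne_zero FiniteIndex.index_ne_zero

theorem IsMulTorsion.finiteIndex_derivedSeries (hG : IsMulTorsion G) (n : ℕ) :
    (derivedSeries G n).FiniteIndex := by
  induction n with
  | zero => rw [derivedSeries_zero]; infer_instance
  | succ n ih => rw [derivedSeries_succ]; exact hG.finiteIndex_commutator_self _

theorem IsMulTorsion.finite_of_isSolvable [Group.IsSolvable G] (hG : IsMulTorsion G) :
    Finite G := by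
  obtain ⟨n, hn⟩ := Group.IsSolvable.solvable (G := G)
  have := hG.finiteIndex_derivedSeries n
  rw [hn] at this
  exact (finite_iff_finite_and_finiteIndex ⊥).2 ⟨inferInstance, this⟩

end

/-- Every finitely generated, torsion, virtually solvable group is finite. -/
theorem fg_torsion_virtually_solvable_group_finite (G : Type*) [Group G] [Group.FG G]
    (hG : ∀ g : G, IsOfFinOrder g)
    (hvs : ∃ K : Subgroup G, K.FiniteIndex ∧ IsSolvable K) : Finite G := by
  obtain ⟨K, hK, hKsolv⟩ := hvs
  have : Group.IsSolvable K := hKsolv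
  have : Finite K := IsMulTorsion.finite_of_isSolvable (IsMulTorsion.subgroup hG K)
  exact (finite_iff_finite_and_finiteIndex K).2 ⟨this, hK⟩
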